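/- Let α = (√5 - 1)/2, let F_n be the Fibonacci numbers, and let g₀(x) = {x} − 1/2 where {x} denotes the fractional part. Set T_k = ∑_{j=1}^{k} g₀(jα). Then the subsequence T_{F_{2n}} converges as n → ∞ and the subsequence T_{F_{2n+1}} converges as n → ∞. -/

import Mathlib

open Real Finset Filter
open scoped goldenRatio

/-!
Take `α = -ψ = φ⁻¹`. Since `F (n + 3) α = F (n + 2) - ψ ^ (n + 3)`, the points
`(F (n + 3) + i) α`, `1 ≤ i ≤ F (n + 2)`, are the points `i α` moved by `-ψ ^ (n + 3)`
modulo `1`. The norm `p² + pq - q²` of `p + qφ` is a nonzero integer, which forces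
`‖i α‖ > |ψ| ^ (n + 3)` for these `i`; hence no fractional part wraps around and
`T (F (n + 4)) = T (F (n + 3)) + T (F (n + 2)) - F (n + 2) ψ ^ (n + 3)`.
Solving this inhomogeneous Fibonacci recurrence gives
`T (F n) = (ψ ^ (2n) / 2 - (-1) ^ n ψ) / √5 - ψ ^ n / 2` for `n ≥ 2`,
so `T (F n) + (-1) ^ n ψ / √5 → 0`.
-/

theorem Int.fract_sub_eq_of_abs_lt {R : Type*} [CommRing R] [LinearOrder R]
    [IsStrictOrderedRing R] [FloorRing R] {x δ : R} (h : ∀ p : ℤ, |δ| < |x - p|) :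
    Int.fract (x - δ) = Int.fract x - δ := by
  have below : |δ| < Int.fract x := by
    simpa [Int.self_sub_floor, abs_of_nonneg (Int.fract_nonneg x)] using h ⌊x⌋
  have above : |δ| < 1 - Int.fract x := by
    have := h (⌊x⌋ + 1)
    rwa [Int.cast_add, Int.cast_one, ← sub_sub, Int.self_sub_floor,
      abs_sub_comm, abs_of_pos (sub_pos.2 (Int.fract_lt_one x))] at this
  refine Int.fract_eq_iff.2 ⟨?_, ?_, ⌊x⌋, ?_⟩
  · linarith [le_abs_self δ]
  · linarith [neg_abs_le δ]
  · rw [← Int.self_sub_floor]; abel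

noncomputable def heckeSum (α : ℝ) (k : ℕ) : ℝ :=
  ∑ j ∈ Icc 1 k, (Int.fract (j * α) - 1 / 2)

theorem heckeSum_add_of_fract_eq {α δ : ℝ} {a b : ℕ}
    (h : ∀ i ∈ Icc 1 b, Int.fract ((a + i : ℕ) * α) = Int.fract (i * α) - δ) :
    heckeSum α (a + b) = heckeSum α a + heckeSum α b - b * δ := by
  have htail : ∑ j ∈ Ioc a (a + b), (Int.fract (j * α) - 1 / 2)
      = ∑ i ∈ Icc 1 b, (Int.fract (i * α) - 1 / 2 - δ) := by
    rw [← Icc_add_one_left_eq_Ioc, ← map_add_left_Icc, sum_map]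
    refine sum_congr rfl fun i hi => ?_
    simp only [addLeftEmbedding_apply, h i hi]
    ring
  have hIcc (k : ℕ) : Icc 1 k = Ioc 0 k := Icc_add_one_left_eq_Ioc 0 k
  rw [heckeSum, heckeSum, heckeSum, hIcc (a + b), hIcc a,
    ← sum_Ioc_consecutive _ (Nat.zero_le a) (Nat.le_add_right a b), htail,
    sum_sub_distrib (s := Icc 1 b), sum_const, Nat.card_Icc, add_tsub_cancel_right, nsmul_eq_mul]
  ring

namespace Real

theorem fib_add_two_lt_goldenRatio_pow (n : ℕ) : (Nat.fib (n + 2) : ℝ) < φ ^ (n + 1) := by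
  have hpos : (0 : ℝ) < Nat.fib (n + 1) := by exact_mod_cast Nat.fib_pos.2 n.succ_pos
  rw [← goldenRatio_mul_fib_succ_add_fib, Nat.fib_add_two, Nat.cast_add]
  nlinarith [one_lt_goldenRatio]

theorem goldenRatio_mul_abs_goldenConj : φ * |ψ| = 1 := by
  rw [abs_of_neg goldenConj_neg]
  linarith [goldenRatio_mul_goldenConj]

theorem abs_goldenConj_lt_one : |ψ| < 1 :=
  abs_lt.2 ⟨neg_one_lt_goldenConj, goldenConj_neg.trans one_pos⟩

theorem fib_add_two_mul_abs_goldenConj_pow_lt_one (n : ℕ) :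
    (Nat.fib (n + 2) : ℝ) * |ψ| ^ (n + 1) < 1 := by
  have hpos : 0 < |ψ| ^ (n + 1) := by positivity [goldenConj_ne_zero]
  calc (Nat.fib (n + 2) : ℝ) * |ψ| ^ (n + 1) < φ ^ (n + 1) * |ψ| ^ (n + 1) :=
        mul_lt_mul_of_pos_right (fib_add_two_lt_goldenRatio_pow n) hpos
    _ = 1 := by rw [← mul_pow, goldenRatio_mul_abs_goldenConj, one_pow]

theorem one_le_abs_add_mul_goldenRatio_mul_abs_add_mul_goldenConj (p : ℤ) {q : ℕ}
    (hq : q ≠ 0) :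
    1 ≤ |p + q * φ| * |p + q * ψ| := by
  have hnorm : ((p : ℝ) + q * φ) * (p + q * ψ) = ((p ^ 2 + p * q - q ^ 2 : ℤ) : ℝ) := by
    push_cast
    linear_combination (p * q : ℝ) * goldenRatio_add_goldenConj
      + (q ^ 2 : ℝ) * goldenRatio_mul_goldenConj
  have hne : p ^ 2 + p * q - q ^ 2 ≠ 0 := by
    intro h
    rw [h, Int.cast_zero, mul_eq_zero, add_comm, add_comm (p : ℝ)] at hnorm
    exact hnorm.elim ((goldenRatio_irrational.natCast_mul hq).add_intCast p).ne_zero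
      ((goldenConj_irrational.natCast_mul hq).add_intCast p).ne_zero
  rw [← abs_mul, hnorm]
  exact_mod_cast Int.one_le_abs hne

theorem abs_goldenConj_pow_lt_abs_add_mul_goldenConj {n q : ℕ} (hq₀ : q ≠ 0)
    (hq : q ≤ Nat.fib (n + 2)) (p : ℤ) : |ψ| ^ (n + 3) < |p + q * ψ| := by
  have hψ : |ψ| ^ (n + 3) < 1 := pow_lt_one₀ (abs_nonneg _) abs_goldenConj_lt_one (by omega)
  have hq1 : (1 : ℝ) ≤ q := by exact_mod_cast Nat.one_le_iff_ne_zero.2 hq₀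
  rcases lt_or_ge p 0 with hneg | hnonneg
  · have hp : (p : ℝ) ≤ -1 := by exact_mod_cast Int.le_sub_one_of_lt hneg
    have : p + q * ψ < -1 := by nlinarith [goldenConj_neg]
    rw [abs_of_neg (a := p + q * ψ) (by linarith)]
    linarith
  rcases lt_or_ge (q : ℤ) p with hbig | hle
  · have hp : (q : ℝ) + 1 ≤ p := by exact_mod_cast hbig
    have : 1 < p + q * ψ := by nlinarith [neg_one_lt_goldenConj]
    rw [abs_of_pos (a := p + q * ψ) (by linarith)]
    linarith
  have hp : (0 : ℝ) ≤ p := by exact_mod_cast hnonneg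
  have hpq : (p : ℝ) ≤ q := by exact_mod_cast hle
  have hpos : 0 < (p : ℝ) + q * φ := by nlinarith [goldenRatio_pos]
  have hbound : ((p : ℝ) + q * φ) * |ψ| ^ (n + 3) < 1 :=
    calc ((p : ℝ) + q * φ) * |ψ| ^ (n + 3) ≤ q * φ ^ 2 * |ψ| ^ (n + 3) := by
          gcongr
          rw [goldenRatio_sq]
          linarith
      _ = q * |ψ| ^ (n + 1) := by
          linear_combination (q * |ψ| ^ (n + 1) * (φ * |ψ| + 1)) * goldenRatio_mul_abs_goldenConj
      _ ≤ Nat.fib (n + 2) * |ψ| ^ (n + 1) := by gcongr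
      _ < 1 := fib_add_two_mul_abs_goldenConj_pow_lt_one n
  have hnorm := one_le_abs_add_mul_goldenRatio_mul_abs_add_mul_goldenConj p hq₀
  rw [abs_of_pos hpos] at hnorm
  nlinarith

theorem fib_mul_goldenConj_pow_succ (n : ℕ) :
    Nat.fib n * ψ ^ (n + 1) = ((-1) ^ n * ψ - ψ ^ (2 * n + 1)) / √5 := by
  have h : φ ^ n * ψ ^ n = (-1) ^ n := by rw [← mul_pow, goldenRatio_mul_goldenConj]
  rw [coe_fib_eq, div_mul_eq_mul_div, sub_mul, pow_succ, ← mul_assoc, h]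
  ring

theorem fract_neg_goldenConj : Int.fract (-ψ) = -ψ :=
  Int.fract_eq_self.2 ⟨by linarith [goldenConj_neg], by linarith [neg_one_lt_goldenConj]⟩

end Real

theorem heckeSum_neg_goldenConj_fib_add_four (n : ℕ) :
    heckeSum (-ψ) (Nat.fib (n + 4)) = heckeSum (-ψ) (Nat.fib (n + 3))
      + heckeSum (-ψ) (Nat.fib (n + 2)) - Nat.fib (n + 2) * ψ ^ (n + 3) := by
  rw [show n + 4 = n + 2 + 2 from rfl, Nat.fib_add_two, add_comm]
  refine heckeSum_add_of_fract_eq fun i hi => ?_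
  have hshift :
      ((Nat.fib (n + 3) + i : ℕ) : ℝ) * -ψ = i * -ψ - ψ ^ (n + 3) + Nat.fib (n + 2) := by
    push_cast
    linear_combination -goldenConj_mul_fib_succ_add_fib (n + 2)
  rw [hshift, Int.fract_add_natCast]
  refine Int.fract_sub_eq_of_abs_lt fun p => ?_
  rw [abs_pow, show (i : ℝ) * -ψ - p = -(p + i * ψ) by ring, abs_neg]
  exact abs_goldenConj_pow_lt_abs_add_mul_goldenConj
    (Nat.one_le_iff_ne_zero.1 (mem_Icc.1 hi).1) (mem_Icc.1 hi).2 p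

theorem heckeSum_neg_goldenConj_fib_add_two (n : ℕ) :
    heckeSum (-ψ) (Nat.fib (n + 2))
      = (ψ ^ (2 * n + 4) / 2 - (-1) ^ n * ψ) / √5 - ψ ^ (n + 2) / 2 := by
  -- `ψ` unfolds to `(1 - √5) / 2`, so after `field_simp` each case is an identity modulo `h5`.
  have h5 : √5 ^ 2 = 5 := Real.sq_sqrt (by norm_num)
  induction n using Nat.twoStepInduction with
  | zero =>
    have h1 : heckeSum (-ψ) 1 = -ψ - 1 / 2 := by
      rw [heckeSum, Icc_self, sum_singleton, Nat.cast_one, one_mul, fract_neg_goldenConj]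
    rw [Nat.fib_two, h1]
    field_simp
    grind
  | one =>
    have h2 : heckeSum (-ψ) 2 = -3 * ψ - 2 := by
      have hfract : Int.fract (2 * -ψ) = -2 * ψ - 1 := by
        refine Int.fract_eq_iff.2 ⟨?_, ?_, 1, by push_cast; ring⟩
        · nlinarith [goldenConj_sq, goldenConj_neg]
        · linarith [neg_one_lt_goldenConj]
      rw [heckeSum, sum_Icc_succ_top one_le_two, Icc_self, sum_singleton, Nat.cast_one, one_mul,
        fract_neg_goldenConj, Nat.cast_two, hfract]
      ring
    rw [show Nat.fib (1 + 2) = 2 from rfl, h2]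
    field_simp
    grind
  | more n ih₀ ih₁ =>
    rw [heckeSum_neg_goldenConj_fib_add_four, ih₁, ih₀, fib_mul_goldenConj_pow_succ]
    field_simp
    grind

theorem tendsto_heckeSum_neg_goldenConj_fib_add_neg_one_pow_mul :
    Tendsto (fun n => heckeSum (-ψ) (Nat.fib n) + (-1) ^ n * ψ / √5) atTop (nhds 0) := by
  rw [← tendsto_add_atTop_iff_nat 2]
  have hψ := tendsto_pow_atTop_nhds_zero_of_abs_lt_one abs_goldenConj_lt_one
  convert ((hψ.pow 2).const_mul (ψ ^ 4 / (2 * √5))).sub (hψ.const_mul (ψ ^ 2 / 2)) using 1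
  · funext n
    rw [heckeSum_neg_goldenConj_fib_add_two]
    ring
  · simp

theorem tendsto_heckeSum_neg_goldenConj_fib_two_mul_add (r : ℕ) :
    Tendsto (fun n => heckeSum (-ψ) (Nat.fib (2 * n + r))) atTop
      (nhds (-((-1) ^ r * ψ / √5))) := by
  have hsub : Tendsto (fun n => 2 * n + r) atTop atTop :=
    tendsto_atTop_atTop.2 fun b => ⟨b, fun n hn => by omega⟩
  have h := (tendsto_heckeSum_neg_goldenConj_fib_add_neg_one_pow_mul.comp hsub).add_const
    (-((-1) ^ r * ψ / √5))
  rw [zero_add] at h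
  refine h.congr fun n => ?_
  simp only [Function.comp_apply, pow_add, pow_mul, neg_one_sq, one_pow, one_mul]
  ring

/-- For the golden mean `α = (√5 - 1)/2`, Hecke's sawtooth `g₀ x = {x} - 1/2` and the
Birkhoff sums `T k = ∑_{j=1}^{k} g₀ (j α)`, the subsequences `T (F (2n))` and
`T (F (2n+1))` both converge, where `F n` are the Fibonacci numbers. -/
theorem hecke_birkhoff_sum_fib_subsequences_converge (α : ℝ)
    (hα : α = (Real.sqrt 5 - 1) / 2)
    (g₀ : ℝ → ℝ) (hg₀ : ∀ x, g₀ x = Int.fract x - 1 / 2)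
    (T : ℕ → ℝ) (hT : ∀ k, T k = ∑ j ∈ Finset.Icc 1 k, g₀ (j * α)) :
    (∃ L₁ : ℝ, Tendsto (fun n : ℕ => T (Nat.fib (2 * n))) atTop (nhds L₁)) ∧
    (∃ L₂ : ℝ, Tendsto (fun n : ℕ => T (Nat.fib (2 * n + 1))) atTop (nhds L₂)) := by
  have hα : α = -ψ := by rw [hα]; ring
  have hT : T = heckeSum (-ψ) := funext fun k => by
    rw [hT, heckeSum, hα]
    exact sum_congr rfl fun j _ => hg₀ _
  subst hT
  exact ⟨⟨_, tendsto_heckeSum_neg_goldenConj_fib_two_mul_add 0⟩,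
    ⟨_, tendsto_heckeSum_neg_goldenConj_fib_two_mul_add 1⟩⟩
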